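/- Every invariant function f ∈ C_n on gl_n(𝔽_q) is a ℂ-linear combination of functions of the form R^n_{(n_1,…,n_r)}(f_1 ⊠ ⋯ ⊠ f_r), where (n_1,…,n_r) runs over compositions of n and each f_i ∈ C_{n_i} is pre-cuspidal (the case r = 1 giving pre-cuspidal functions themselves). -/

import Mathlib

open Matrix BigOperators

namespace HCPaper

open scoped Classical

/-- `gl F n` : the additive group of `n × n` matrices over `F`. -/
abbrev gl (F : Type) (n : ℕ) := Matrix (Fin n) (Fin n) F

variable {F : Type} [Field F] [Fintype F] [DecidableEq F]

/-- Conjugation (adjoint) action of `GL_n(F)` on `gl_n(F)`. -/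
def conjM {n : ℕ} (g : Matrix.GeneralLinearGroup (Fin n) F) (x : gl F n) : gl F n :=
  (g : Matrix (Fin n) (Fin n) F) * x * ((g⁻¹ : Matrix.GeneralLinearGroup (Fin n) F) : Matrix (Fin n) (Fin n) F)

/-- A function `f : gl_n(F) → ℂ` is invariant if it is constant on `GL_n(F)`-conjugacy orbits. -/
def Invariant (n : ℕ) (f : gl F n → ℂ) : Prop :=
  ∀ (g : Matrix.GeneralLinearGroup (Fin n) F) (x : gl F n), f (conjM g x) = f x

/-- Invariance for functions on `gl_k(F) × gl_l(F)` under `GL_k(F) × GL_l(F)`. -/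
def Invariant₂ (k l : ℕ) (h : gl F k × gl F l → ℂ) : Prop :=
  ∀ (g₁ : Matrix.GeneralLinearGroup (Fin k) F) (g₂ : Matrix.GeneralLinearGroup (Fin l) F)
    (x : gl F k) (y : gl F l), h (conjM g₁ x, conjM g₂ y) = h (x, y)

/-- Transport of matrices along an equality of sizes. -/
def castM {m n : ℕ} (h : m = n) (x : gl F m) : gl F n :=
  Matrix.reindex (finCongr h) (finCongr h) x

/-- Transport of functions along an equality of sizes. -/
def castFun {m n : ℕ} (h : m = n) (f : gl F m → ℂ) : gl F n → ℂ :=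
  fun x => f (castM h.symm x)

/-- The block upper-triangular matrix `[x u; 0 y]`, viewed in `gl_{k+l}(F)`. -/
def but (k l : ℕ) (x : gl F k) (u : Matrix (Fin k) (Fin l) F) (y : gl F l) : gl F (k + l) :=
  Matrix.reindex finSumFinEquiv finSumFinEquiv (Matrix.fromBlocks x u 0 y)

/-- The block lower-triangular matrix `[x 0; v y]`, viewed in `gl_{k+l}(F)`. -/
def blt (k l : ℕ) (x : gl F k) (v : Matrix (Fin l) (Fin k) F) (y : gl F l) : gl F (k + l) :=
  Matrix.reindex finSumFinEquiv finSumFinEquiv (Matrix.fromBlocks x 0 v y)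

/-- View a matrix in `gl_{k+l}(F)` as a `2 × 2`-block matrix. -/
def blk (k l : ℕ) (m : gl F (k + l)) : Matrix (Fin k ⊕ Fin l) (Fin k ⊕ Fin l) F :=
  Matrix.reindex finSumFinEquiv.symm finSumFinEquiv.symm m

/-- Membership in `P_{k,l}` : being block upper triangular with blocks of sizes `k, l`. -/
def IsBUT (k l : ℕ) (m : gl F (k + l)) : Prop := Matrix.toBlocks₂₁ (blk k l m) = 0

/-- The projection `π : P_{k,l} → gl_k(F) × gl_l(F)` deleting the off-diagonal block. -/
def proj (k l : ℕ) (m : gl F (k + l)) : gl F k × gl F l :=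
  (Matrix.toBlocks₁₁ (blk k l m), Matrix.toBlocks₂₂ (blk k l m))

/-- The order of the group `P^×_{k,l}` of invertible block upper-triangular matrices. -/
noncomputable def Pcard (F : Type) [Field F] [Fintype F] [DecidableEq F] (k l : ℕ) : ℕ :=
  Nat.card {g : Matrix.GeneralLinearGroup (Fin (k + l)) F //
    IsBUT k l (g : Matrix (Fin (k + l)) (Fin (k + l)) F)}

/-- Harish-Chandra restriction `*R^{k+l}_{k,l}`; by convention it is the identity
(under the canonical identifications) when `k = 0` or `l = 0`. -/
noncomputable def HCres (k l : ℕ) (f : gl F (k + l) → ℂ) : gl F k × gl F l → ℂ :=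
  if hk : k = 0 then fun p => f (castM (by omega) p.2)
  else if hl : l = 0 then fun p => f (castM (by omega) p.1)
  else fun p =>
    ((Fintype.card F : ℂ) ^ (k * l))⁻¹ * ∑ u : Matrix (Fin k) (Fin l) F, f (but k l p.1 u p.2)

/-- Harish-Chandra induction `R^{k+l}_{k,l}`; by convention it is the identity
(under the canonical identifications) when `k = 0` or `l = 0`. -/
noncomputable def HCind (k l : ℕ) (h : gl F k × gl F l → ℂ) : gl F (k + l) → ℂ :=
  if hk : k = 0 then fun z => h (0, castM (by omega) z)
  else if hl : l = 0 then fun z => h (castM (by omega) z, 0)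
  else fun z =>
    ((Pcard F k l : ℂ))⁻¹ *
      ∑ g : Matrix.GeneralLinearGroup (Fin (k + l)) F,
        if IsBUT k l (conjM g z) then h (proj k l (conjM g z)) else 0

/-- The hermitian inner product on `C_n`. -/
noncomputable def inn (n : ℕ) (f g : gl F n → ℂ) : ℂ :=
  ((Fintype.card (Matrix.GeneralLinearGroup (Fin n) F) : ℂ))⁻¹ *
    ∑ x : gl F n, f x * (starRingEnd ℂ) (g x)

/-- The hermitian inner product on invariant functions on `gl_k(F) × gl_l(F)`. -/
noncomputable def inn₂ (k l : ℕ) (f g : gl F k × gl F l → ℂ) : ℂ :=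
  ((Fintype.card (Matrix.GeneralLinearGroup (Fin k) F) *
      Fintype.card (Matrix.GeneralLinearGroup (Fin l) F) : ℂ))⁻¹ *
    ∑ p : gl F k × gl F l, f p * (starRingEnd ℂ) (g p)

/-- `f ∈ C_n` is pre-cuspidal if all proper Harish-Chandra restrictions of `f` vanish. -/
def PreCuspidal (n : ℕ) (f : gl F n → ℂ) : Prop :=
  ∀ (k l : ℕ), 1 ≤ k → 1 ≤ l → ∀ hkl : k + l = n, HCres k l (castFun hkl.symm f) = 0

/-- The composite `R_{(n_1,…,n_r)} ∘ *R_{(n_1,…,n_r)}` of the iterated two-block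
Harish-Chandra induction and restriction along the composition `(n_1,…,n_r)`. -/
noncomputable def RcompRes : (L : List ℕ) → (gl F L.sum → ℂ) → gl F L.sum → ℂ
  | [], f => f
  | (k :: L), f =>
      castFun (List.sum_cons).symm
        (HCind k L.sum fun p =>
          RcompRes L (fun y => HCres k L.sum (castFun List.sum_cons f) (p.1, y)) p.2)

/-- The duality operation `𝒟_n(f) = Σ_{(n_1,…,n_r) ⊨ n} (-1)^{n-r}
R_{(n_1,…,n_r)}(*R_{(n_1,…,n_r)} f)`, the sum over all compositions of `n`. -/
noncomputable def Dual (n : ℕ) (f : gl F n → ℂ) : gl F n → ℂ :=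
  ∑ c : Composition n,
    ((-1 : ℂ)) ^ (n - c.length) •
      castFun c.blocks_sum (RcompRes c.blocks (castFun c.blocks_sum.symm f))

/-- `C_n`, the subspace of invariant functions, as a `ℂ`-submodule of all functions. -/
noncomputable def InvSub (F : Type) [Field F] (n : ℕ) : Submodule ℂ (gl F n → ℂ) where
  carrier := {f | Invariant n f}
  add_mem' := by
    intro a b ha hb g x
    simp only [Pi.add_apply]
    rw [ha g x, hb g x]
  zero_mem' := by intro g x; rfl
  smul_mem' := by
    intro c f hf g x
    simp only [Pi.smul_apply]
    rw [hf g x]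

/-- `χ` is the character of a finite-dimensional complex representation of the
additive group `gl_n(F)`. -/
def IsChar (n : ℕ) (χ : gl F n → ℂ) : Prop :=
  ∃ V : FDRep ℂ (Multiplicative (gl F n)),
    ∀ x : gl F n, FDRep.character V (Multiplicative.ofAdd x) = χ x

/-- An invariant character of `gl_n(F)`. -/
def IsInvChar (n : ℕ) (χ : gl F n → ℂ) : Prop := IsChar n χ ∧ Invariant n χ

/-- A character of the additive group `gl_k(F) × gl_l(F)`. -/
def IsChar₂ (k l : ℕ) (χ : gl F k × gl F l → ℂ) : Prop :=
  ∃ V : FDRep ℂ (Multiplicative (gl F k × gl F l)),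
    ∀ p : gl F k × gl F l, FDRep.character V (Multiplicative.ofAdd p) = χ p

/-- An invariant character of `gl_k(F) × gl_l(F)`. -/
def IsInvChar₂ (k l : ℕ) (χ : gl F k × gl F l → ℂ) : Prop := IsChar₂ k l χ ∧ Invariant₂ k l χ

/-- An irreducible invariant character: a nonzero invariant character which is not
the sum of two nonzero invariant characters. -/
def IrrInvChar (n : ℕ) (χ : gl F n → ℂ) : Prop :=
  IsInvChar n χ ∧ χ ≠ 0 ∧
    ¬ ∃ χ₁ χ₂ : gl F n → ℂ, IsInvChar n χ₁ ∧ IsInvChar n χ₂ ∧ χ₁ ≠ 0 ∧ χ₂ ≠ 0 ∧ χ = χ₁ + χ₂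


/-- Functions of the form `R^n_{(n_1,…,n_r)}(f_1 ⊠ ⋯ ⊠ f_r)` with all `f_i` pre-cuspidal
invariant functions (and `(n_1,…,n_r)` a composition of `n`); `unit` is the empty
composition of `0`, and `cusp` the case `r = 1`. -/
inductive IsIndPreCusp {F : Type} [Field F] [Fintype F] [DecidableEq F] :
    (n : ℕ) → (gl F n → ℂ) → Prop
  | unit : IsIndPreCusp 0 (fun _ => 1)
  | cusp (n : ℕ) (hn : 1 ≤ n) (f : gl F n → ℂ) (hf : Invariant n f)
      (hc : PreCuspidal n f) : IsIndPreCusp n f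
  | step (k m : ℕ) (hk : 1 ≤ k) (hm : 1 ≤ m) (f : gl F k → ℂ) (hf : Invariant k f)
      (hc : PreCuspidal k f) (g : gl F m → ℂ) (hg : IsIndPreCusp m g) :
      IsIndPreCusp (k + m) (HCind k m fun p => f p.1 * g p.2)

/-!
Induction on `n`. The span `W` of the induced pre-cuspidal functions consists of invariant
functions, so it suffices that an invariant `f` orthogonal to `W` vanishes. Such an `f` is
pre-cuspidal, hence itself a generator of `W`, hence `0`. To see that `*R_{k,l} f = 0` (by
induction on `k`), note that by the induction on `n` the invariant functions on `gl_k` and `gl_l`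
are spanned by induced pre-cuspidal functions, and test `*R_{k,l} f` against their products
`a ⊠ b`, which suffices since `*R_{k,l} f` is invariant. If `a` is pre-cuspidal, Frobenius
reciprocity turns this into `f ⊥ R_{k,l}(a ⊠ b) ∈ W`; if `a = R_{k₁,k₂}(c ⊠ d)`, it turns it into
`*R_{k₁,k₂}` of the slices of `*R_{k,l} f`, which by transitivity of restriction is
`*R_{k₂,l}` of `*R_{k₁,k₂+l} f = 0`.
-/

end HCPaper

namespace HCPaper

open scoped Classical

section Conjugation

variable {F : Type} [Field F]

lemma conjM_conjM {n : ℕ} (g h : GL (Fin n) F) (x : gl F n) :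
    conjM g (conjM h x) = conjM (g * h) x := by
  simp only [conjM, _root_.mul_inv_rev, Units.val_mul, mul_assoc]

lemma conjM_one {n : ℕ} (x : gl F n) : conjM (1 : GL (Fin n) F) x = x := by
  simp [conjM]

def conjEquiv {n : ℕ} (g : GL (Fin n) F) : gl F n ≃ gl F n where
  toFun := conjM g
  invFun := conjM g⁻¹
  left_inv x := by rw [conjM_conjM, inv_mul_cancel, conjM_one]
  right_inv x := by rw [conjM_conjM, mul_inv_cancel, conjM_one]

lemma Invariant₂.invariant_left {k l : ℕ} {h : gl F k × gl F l → ℂ} (H : Invariant₂ k l h)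
    (y : gl F l) : Invariant k (fun x => h (x, y)) := by
  intro g x
  simpa only [conjM_one] using H g 1 x y

lemma Invariant₂.invariant_right {k l : ℕ} {h : gl F k × gl F l → ℂ} (H : Invariant₂ k l h)
    (x : gl F k) : Invariant l (fun y => h (x, y)) := by
  intro g y
  simpa only [conjM_one] using H 1 g x y

lemma sum_conjM_conjM {n : ℕ} {M : Type*} [AddCommMonoid M] [Fintype (GL (Fin n) F)]
    (φ : gl F n → M) (g₀ : GL (Fin n) F) (z : gl F n) :
    ∑ g : GL (Fin n) F, φ (conjM g (conjM g₀ z)) = ∑ g : GL (Fin n) F, φ (conjM g z) := by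
  simp only [conjM_conjM]
  exact Fintype.sum_equiv (Equiv.mulRight g₀) _ _ fun _ => rfl

end Conjugation

lemma castM_self {F : Type} {n : ℕ} (h : n = n) (x : gl F n) : castM h x = x := by
  ext i j
  simp [castM, reindex_apply]

lemma castFun_self {F : Type} {n : ℕ} (h : n = n) (f : gl F n → ℂ) : castFun h f = f := by
  funext x
  simp [castFun, castM_self]

section Blocks

variable {F : Type} [Field F]

lemma blk_but {k l : ℕ} (x : gl F k) (u : Matrix (Fin k) (Fin l) F) (y : gl F l) :
    blk k l (but k l x u y) = fromBlocks x u 0 y := by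
  simp [blk, but]

lemma isBUT_but {k l : ℕ} (x : gl F k) (u : Matrix (Fin k) (Fin l) F) (y : gl F l) :
    IsBUT k l (but k l x u y) := by
  rw [IsBUT, blk_but, toBlocks_fromBlocks₂₁]

lemma proj_but {k l : ℕ} (x : gl F k) (u : Matrix (Fin k) (Fin l) F) (y : gl F l) :
    proj k l (but k l x u y) = (x, y) := by
  rw [proj, blk_but, toBlocks_fromBlocks₁₁, toBlocks_fromBlocks₂₂]

lemma but_toBlocks_of_isBUT {k l : ℕ} {m : gl F (k + l)} (hm : IsBUT k l m) :
    but k l (blk k l m).toBlocks₁₁ (blk k l m).toBlocks₁₂ (blk k l m).toBlocks₂₂ = m := by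
  rw [but, ← hm, fromBlocks_toBlocks]
  simp [blk]

lemma but_mul_but {k l : ℕ} (x x' : gl F k) (u u' : Matrix (Fin k) (Fin l) F)
    (y y' : gl F l) :
    but k l x u y * but k l x' u' y' = but k l (x * x') (x * u' + u * y') (y * y') := by
  simp only [but, reindex_apply, submatrix_mul_equiv, fromBlocks_multiply]
  congr 1; simp

lemma but_one {k l : ℕ} : but k l (1 : gl F k) 0 (1 : gl F l) = 1 := by
  simp [but, fromBlocks_one, reindex_apply, submatrix_one_equiv]

def blockDiagGL {k l : ℕ} (g₁ : GL (Fin k) F) (g₂ : GL (Fin l) F) : GL (Fin (k + l)) F where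
  val := but k l g₁ 0 g₂
  inv := but k l ↑g₁⁻¹ 0 ↑g₂⁻¹
  val_inv := by simp [but_mul_but, but_one]
  inv_val := by simp [but_mul_but, but_one]

def mulLeftRightEquiv {k l : ℕ} (g₁ : GL (Fin k) F) (g₂ : GL (Fin l) F) :
    Matrix (Fin k) (Fin l) F ≃ Matrix (Fin k) (Fin l) F where
  toFun u := (g₁ : gl F k) * u * (↑g₂⁻¹ : gl F l)
  invFun u := (↑g₁⁻¹ : gl F k) * u * (g₂ : gl F l)
  left_inv u := by simp [← Matrix.mul_assoc]
  right_inv u := by simp [← Matrix.mul_assoc]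

lemma conjM_blockDiagGL_but {k l : ℕ} (g₁ : GL (Fin k) F) (g₂ : GL (Fin l) F)
    (x : gl F k) (u : Matrix (Fin k) (Fin l) F) (y : gl F l) :
    conjM (blockDiagGL g₁ g₂) (but k l x u y) =
      but k l (conjM g₁ x) (mulLeftRightEquiv g₁ g₂ u) (conjM g₂ y) := by
  change but k l _ 0 _ * but k l x u y * but k l _ 0 _ = _
  simp [but_mul_but, conjM, mulLeftRightEquiv, Matrix.mul_assoc]

lemma sum_isBUT {k l : ℕ} [Fintype F] {M : Type*} [AddCommMonoid M] (Φ : gl F (k + l) → M) :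
    ∑ m, (if IsBUT k l m then Φ m else 0) =
      ∑ p : gl F k × gl F l, ∑ u : Matrix (Fin k) (Fin l) F, Φ (but k l p.1 u p.2) := by
  rw [← Finset.sum_filter, ← Fintype.sum_prod_type']
  symm
  refine Finset.sum_nbij' (fun t => but k l t.1.1 t.2 t.1.2)
    (fun m => (((blk k l m).toBlocks₁₁, (blk k l m).toBlocks₂₂), (blk k l m).toBlocks₁₂))
    (fun t _ => by simp [isBUT_but]) (fun _ _ => Finset.mem_univ _)
    (fun t _ => by simp [blk_but]) (fun m hm => but_toBlocks_of_isBUT (by simpa using hm))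
    (fun _ _ => rfl)

end Blocks

section Invariance

variable {F : Type} [Field F] [Fintype F]

lemma HCres_apply {k l : ℕ} (hk : k ≠ 0) (hl : l ≠ 0) (f : gl F (k + l) → ℂ)
    (p : gl F k × gl F l) :
    HCres k l f p =
      ((Fintype.card F : ℂ) ^ (k * l))⁻¹ * ∑ u : Matrix (Fin k) (Fin l) F,
        f (but k l p.1 u p.2) := by
  rw [HCres, dif_neg hk, dif_neg hl]

lemma HCind_apply [DecidableEq F] {k l : ℕ} (hk : k ≠ 0) (hl : l ≠ 0)
    (h : gl F k × gl F l → ℂ) (z : gl F (k + l)) :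
    HCind k l h z = ((Pcard F k l : ℂ))⁻¹ *
      ∑ g : GL (Fin (k + l)) F, if IsBUT k l (conjM g z) then h (proj k l (conjM g z)) else 0 := by
  rw [HCind, dif_neg hk, dif_neg hl]

variable {k l : ℕ}

lemma HCres_invariant₂ (hk : k ≠ 0) (hl : l ≠ 0) {f : gl F (k + l) → ℂ}
    (hf : Invariant (k + l) f) : Invariant₂ k l (HCres k l f) := by
  intro g₁ g₂ x y
  simp only [HCres_apply hk hl]
  congr 1
  rw [← (mulLeftRightEquiv g₁ g₂).sum_comp]
  simp only [← conjM_blockDiagGL_but]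
  exact Finset.sum_congr rfl fun u _ => hf _ _

lemma HCind_invariant [DecidableEq F] (hk : k ≠ 0) (hl : l ≠ 0) (h : gl F k × gl F l → ℂ) :
    Invariant (k + l) (HCind k l h) := by
  intro g₀ z
  rw [HCind_apply hk hl, HCind_apply hk hl,
    sum_conjM_conjM (fun w => if IsBUT k l w then h (proj k l w) else 0)]

end Invariance

lemma IsIndPreCusp.invariant {F : Type} [Field F] [Fintype F] [DecidableEq F] {n : ℕ}
    {f : gl F n → ℂ} (hf : IsIndPreCusp n f) : Invariant n f := by
  induction hf with
  | unit => exact fun _ _ => rfl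
  | cusp _ _ _ hf _ => exact hf
  | step k m hk hm => exact HCind_invariant (by omega) (by omega) _

section Pairing

variable {ι κ : Type*} [Fintype ι] [Fintype κ]

/-- The hermitian form of the paper's inner products on `C_n`, without their normalising factor. -/
noncomputable def pair (u v : ι → ℂ) : ℂ := ∑ x, u x * starRingEnd ℂ (v x)

lemma pair_eq_inner (u v : ι → ℂ) :
    pair u v = inner ℂ (WithLp.toLp 2 v : EuclideanSpace ℂ ι) (WithLp.toLp 2 u) := by
  simp [pair, PiLp.inner_apply]

lemma conj_pair (u v : ι → ℂ) : starRingEnd ℂ (pair u v) = pair v u := by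
  simp [pair, mul_comm]

lemma eq_zero_of_pair_self_eq_zero {v : ι → ℂ} (h : pair v v = 0) : v = 0 := by
  rw [pair_eq_inner, inner_self_eq_zero] at h
  simpa using congrArg WithLp.ofLp h

lemma le_of_forall_pair_eq_zero {V W : Submodule ℂ (ι → ℂ)} (hWV : W ≤ V)
    (h : ∀ v ∈ V, (∀ w ∈ W, pair w v = 0) → v = 0) : V ≤ W := by
  intro v hv
  let K : Submodule ℂ (EuclideanSpace ℂ ι) := W.comap (WithLp.linearEquiv 2 ℂ (ι → ℂ)).toLinearMap
  obtain ⟨y, hy, z, hz, hvyz⟩ := K.exists_add_mem_mem_orthogonal (WithLp.toLp 2 v)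
  replace hvyz : v = y.ofLp + z.ofLp := congrArg WithLp.ofLp hvyz
  have hzV : z.ofLp ∈ V := by
    simpa [hvyz] using V.sub_mem hv (hWV hy)
  have hz0 : z.ofLp = 0 := h _ hzV fun w hw => by
    rw [pair_eq_inner]
    exact K.inner_left_of_mem_orthogonal (u := WithLp.toLp 2 w) hw hz
  rw [hvyz, hz0, add_zero]
  exact hy

lemma pair_tensor (a : ι → ℂ) (b : κ → ℂ) (h : ι × κ → ℂ) :
    pair (fun p => a p.1 * b p.2) h = ∑ y, b y * pair a (fun x => h (x, y)) := by
  simp only [pair, Fintype.sum_prod_type, Finset.mul_sum]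
  rw [Finset.sum_comm]
  exact Finset.sum_congr rfl fun _ _ => Finset.sum_congr rfl fun _ _ => by ring

noncomputable def tensorPairing (h : ι × κ → ℂ) : (ι → ℂ) →ₗ[ℂ] (κ → ℂ) →ₗ[ℂ] ℂ :=
  LinearMap.mk₂ ℂ (fun a b => pair (fun p => a p.1 * b p.2) h)
    (fun _ _ _ => by simp only [pair, Pi.add_apply, add_mul, Finset.sum_add_distrib])
    (fun _ _ _ => by simp only [pair, Pi.smul_apply, smul_eq_mul, Finset.mul_sum, mul_assoc])
    (fun _ _ _ => by simp only [pair, Pi.add_apply, mul_add, add_mul, Finset.sum_add_distrib])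
    (fun _ _ _ => by
      simp only [pair, Pi.smul_apply, smul_eq_mul, Finset.mul_sum]
      exact Finset.sum_congr rfl fun _ _ => by ring)

lemma pair_tensor_eq_zero_of_mem_span {A : Set (ι → ℂ)} {B : Set (κ → ℂ)} {h : ι × κ → ℂ}
    (H : ∀ a ∈ A, ∀ b ∈ B, pair (fun p => a p.1 * b p.2) h = 0)
    {a : ι → ℂ} {b : κ → ℂ} (ha : a ∈ Submodule.span ℂ A) (hb : b ∈ Submodule.span ℂ B) :
    pair (fun p => a p.1 * b p.2) h = 0 := by
  have hab := Submodule.apply_mem_map₂ (tensorPairing h) ha hb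
  rw [Submodule.map₂_span_span, Submodule.span_eq_bot.mpr] at hab
  · exact (Submodule.mem_bot ℂ).mp hab
  · rintro _ ⟨a, ha, b, hb, rfl⟩
    exact H a ha b hb

end Pairing

lemma eq_zero_of_forall_pair_tensor_eq_zero {F : Type} [Field F] [Fintype F] {k l : ℕ}
    {h : gl F k × gl F l → ℂ} (H : Invariant₂ k l h)
    (h0 : ∀ a, Invariant k a → ∀ b, Invariant l b → pair (fun p => a p.1 * b p.2) h = 0) :
    h = 0 := by
  -- for invariant `a`, `y ↦ pair (h (·, y)) a` is invariant and orthogonal to all invariant `b`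
  have slice : ∀ a, Invariant k a → ∀ y, pair (fun x => h (x, y)) a = 0 := by
    intro a ha
    let φ : gl F l → ℂ := fun y => pair (fun x => h (x, y)) a
    have hφ : Invariant l φ := fun g y => by
      simp only [φ, fun x => H.invariant_right x g y]
    refine congrFun (eq_zero_of_pair_self_eq_zero ?_)
    rw [← h0 a ha φ hφ, pair_tensor, pair]
    exact Finset.sum_congr rfl fun y _ => by rw [conj_pair]
  funext ⟨x, y⟩
  exact congrFun (eq_zero_of_pair_self_eq_zero (slice _ (H.invariant_left y) y)) x

section Adjunction

variable {F : Type} [Field F] [Fintype F] [DecidableEq F] {k l : ℕ}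

lemma Pcard_pos : 0 < Pcard F k l := by
  have : IsBUT k l ((1 : GL (Fin (k + l)) F) : gl F (k + l)) := by
    simpa only [Units.val_one, but_one] using isBUT_but (1 : gl F k) 0 (1 : gl F l)
  have : Nonempty {g : GL (Fin (k + l)) F // IsBUT k l (g : gl F (k + l))} := ⟨⟨1, this⟩⟩
  exact Nat.card_pos

/-- Frobenius reciprocity, up to normalisation. -/
lemma pair_HCind (hk : k ≠ 0) (hl : l ≠ 0) (h : gl F k × gl F l → ℂ)
    {φ : gl F (k + l) → ℂ} (hφ : Invariant (k + l) φ) :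
    pair (HCind k l h) φ =
      Fintype.card (GL (Fin (k + l)) F) * (Fintype.card F : ℂ) ^ (k * l) / Pcard F k l *
        pair h (HCres k l φ) := by
  let Φ : gl F (k + l) → ℂ := fun w => h (proj k l w) * starRingEnd ℂ (φ w)
  have hind : pair (HCind k l h) φ = (Pcard F k l : ℂ)⁻¹ *
      ∑ g : GL (Fin (k + l)) F, ∑ z, if IsBUT k l (conjM g z) then Φ (conjM g z) else 0 := by
    simp only [pair, HCind_apply hk hl, mul_assoc, Finset.sum_mul, ← Finset.mul_sum, Φ, ite_mul,
      zero_mul]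
    rw [Finset.sum_comm]
    simp only [show ∀ g z, φ (conjM g z) = φ z from hφ]
  have hres : pair h (HCres k l φ) = ((Fintype.card F : ℂ) ^ (k * l))⁻¹ *
      ∑ p : gl F k × gl F l, ∑ u : Matrix (Fin k) (Fin l) F, Φ (but k l p.1 u p.2) := by
    simp only [pair, HCres_apply hk hl, Φ, proj_but, map_mul, map_inv₀, map_pow, map_natCast,
      map_sum, Finset.mul_sum]
    exact Finset.sum_congr rfl fun _ _ => Finset.sum_congr rfl fun _ _ => by ring
  have hconj : ∀ g : GL (Fin (k + l)) F,
      ∑ z, (if IsBUT k l (conjM g z) then Φ (conjM g z) else 0) =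
        ∑ w, if IsBUT k l w then Φ w else 0 :=
    fun g => (conjEquiv g).sum_comp fun w => if IsBUT k l w then Φ w else 0
  rw [hind, hres, Finset.sum_congr rfl fun g _ => hconj g, Finset.sum_const, Finset.card_univ,
    sum_isBUT, nsmul_eq_mul]
  have hq : (Fintype.card F : ℂ) ^ (k * l) ≠ 0 := pow_ne_zero _ (by simp)
  have hP : (Pcard F k l : ℂ) ≠ 0 := by exact_mod_cast Pcard_pos.ne'
  field_simp

end Adjunction

section Transitivity

variable {F : Type}

lemma finSumFinEquiv_symm_eq_dite {k l : ℕ} (i : Fin (k + l)) :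
    finSumFinEquiv.symm i =
      if h : (i : ℕ) < k then Sum.inl ⟨i, h⟩ else Sum.inr ⟨(i : ℕ) - k, by omega⟩ := by
  split_ifs with h
  · exact finSumFinEquiv_symm_apply_castAdd (n := l) ⟨(i : ℕ), h⟩
  · have hi : i = Fin.natAdd k ⟨(i : ℕ) - k, by omega⟩ := by ext; simp; omega
    conv_lhs => rw [hi]
    exact finSumFinEquiv_symm_apply_natAdd _

def splitRowsEquiv (p q m : ℕ) :
    Matrix (Fin (p + q)) (Fin m) F ≃ Matrix (Fin p) (Fin m) F × Matrix (Fin q) (Fin m) F where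
  toFun u := (fun i j => u ⟨i, by omega⟩ j, fun i j => u ⟨p + i, by omega⟩ j)
  invFun t i j := if h : (i : ℕ) < p then t.1 ⟨i, h⟩ j else t.2 ⟨(i : ℕ) - p, by omega⟩ j
  left_inv u := by
    funext i j
    dsimp only
    split
    · rfl
    · congr 1; ext; simp; omega
  right_inv t := by
    ext i j <;> simp

lemma splitRowsEquiv_symm_apply (p q m : ℕ) (a : Matrix (Fin p) (Fin m) F)
    (b : Matrix (Fin q) (Fin m) F) (i : Fin (p + q)) (j : Fin m) :
    (splitRowsEquiv p q m).symm (a, b) i j =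
      if h : (i : ℕ) < p then a ⟨i, h⟩ j else b ⟨(i : ℕ) - p, by omega⟩ j := rfl

def splitColsEquiv (p q m : ℕ) :
    Matrix (Fin p) (Fin (q + m)) F ≃ Matrix (Fin p) (Fin q) F × Matrix (Fin p) (Fin m) F where
  toFun u := (fun i j => u i ⟨j, by omega⟩, fun i j => u i ⟨q + j, by omega⟩)
  invFun t i j := if h : (j : ℕ) < q then t.1 i ⟨j, h⟩ else t.2 i ⟨(j : ℕ) - q, by omega⟩
  left_inv u := by
    funext i j
    dsimp only
    split
    · rfl
    · congr 1; ext; simp; omega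
  right_inv t := by
    ext i j <;> simp

lemma splitColsEquiv_symm_apply (p q m : ℕ) (a : Matrix (Fin p) (Fin q) F)
    (b : Matrix (Fin p) (Fin m) F) (i : Fin p) (j : Fin (q + m)) :
    (splitColsEquiv p q m).symm (a, b) i j =
      if h : (j : ℕ) < q then a i ⟨j, h⟩ else b i ⟨(j : ℕ) - q, by omega⟩ := rfl

variable [Field F]

lemma but_apply {k l : ℕ} (x : gl F k) (u : Matrix (Fin k) (Fin l) F) (y : gl F l)
    (i j : Fin (k + l)) :
    but k l x u y i j =
      if hi : (i : ℕ) < k then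
        (if hj : (j : ℕ) < k then x ⟨i, hi⟩ ⟨j, hj⟩ else u ⟨i, hi⟩ ⟨(j : ℕ) - k, by omega⟩)
      else
        (if hj : (j : ℕ) < k then 0 else y ⟨(i : ℕ) - k, by omega⟩ ⟨(j : ℕ) - k, by omega⟩) := by
  simp only [but, reindex_apply, submatrix_apply, finSumFinEquiv_symm_eq_dite]
  split <;> split <;> rfl

/-- Both sides are the three-block upper triangular matrix with diagonal `x₁, x₂, y`. -/
lemma but_but_eq_castM_but_but (k₁ k₂ m : ℕ) (x₁ : gl F k₁) (x₂ : gl F k₂) (y : gl F m)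
    (v : Matrix (Fin k₁) (Fin k₂) F) (b : Matrix (Fin k₁) (Fin m) F)
    (c : Matrix (Fin k₂) (Fin m) F) :
    but (k₁ + k₂) m (but k₁ k₂ x₁ v x₂) ((splitRowsEquiv k₁ k₂ m).symm (b, c)) y =
      castM (Nat.add_assoc k₁ k₂ m).symm
        (but k₁ (k₂ + m) x₁ ((splitColsEquiv k₁ k₂ m).symm (v, b)) (but k₂ m x₂ c y)) := by
  ext i j
  simp only [castM, reindex_apply, submatrix_apply, but_apply, splitRowsEquiv_symm_apply,
    splitColsEquiv_symm_apply, finCongr_symm, finCongr_apply, Fin.val_cast]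
  split_ifs <;> first | rfl | omega | (congr 1 <;> ext <;> simp <;> omega)

variable [Fintype F]

lemma sum_but_but (k₁ k₂ m : ℕ) (f : gl F (k₁ + k₂ + m) → ℂ) (x₁ : gl F k₁) (x₂ : gl F k₂)
    (y : gl F m) :
    ∑ v : Matrix (Fin k₁) (Fin k₂) F, ∑ u : Matrix (Fin (k₁ + k₂)) (Fin m) F,
        f (but (k₁ + k₂) m (but k₁ k₂ x₁ v x₂) u y) =
      ∑ c : Matrix (Fin k₂) (Fin m) F, ∑ w : Matrix (Fin k₁) (Fin (k₂ + m)) F,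
        f (castM (Nat.add_assoc k₁ k₂ m).symm (but k₁ (k₂ + m) x₁ w (but k₂ m x₂ c y))) := by
  simp only [← (splitRowsEquiv k₁ k₂ m).symm.sum_comp, ← (splitColsEquiv k₁ k₂ m).symm.sum_comp,
    Fintype.sum_prod_type, but_but_eq_castM_but_but]
  exact (Finset.sum_congr rfl fun _ _ => Finset.sum_comm).trans Finset.sum_comm

lemma HCres_HCres {k₁ k₂ m : ℕ} (hk₁ : k₁ ≠ 0) (hk₂ : k₂ ≠ 0) (hm : m ≠ 0)
    (f : gl F (k₁ + k₂ + m) → ℂ) (x₁ : gl F k₁) (x₂ : gl F k₂) (y : gl F m) :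
    HCres k₁ k₂ (fun x => HCres (k₁ + k₂) m f (x, y)) (x₁, x₂) =
      HCres k₂ m (fun z => HCres k₁ (k₂ + m) (castFun (Nat.add_assoc k₁ k₂ m) f) (x₁, z))
        (x₂, y) := by
  simp only [HCres_apply hk₁ hk₂, HCres_apply (by omega : k₁ + k₂ ≠ 0) hm,
    HCres_apply hk₂ hm, HCres_apply hk₁ (by omega : k₂ + m ≠ 0), ← Finset.mul_sum, castFun]
  rw [← mul_assoc, ← mul_assoc, sum_but_but, ← mul_inv, ← mul_inv, ← pow_add, ← pow_add]
  congr 3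
  ring

end Transitivity

section Orthogonality

variable {F : Type} [Field F] [Fintype F] [DecidableEq F]

lemma pair_HCind_eq_zero_iff {k l : ℕ} (hk : k ≠ 0) (hl : l ≠ 0) (h : gl F k × gl F l → ℂ)
    {φ : gl F (k + l) → ℂ} (hφ : Invariant (k + l) φ) :
    pair (HCind k l h) φ = 0 ↔ pair h (HCres k l φ) = 0 := by
  have hP : (Pcard F k l : ℂ) ≠ 0 := by exact_mod_cast Pcard_pos.ne'
  rw [pair_HCind hk hl h hφ, mul_eq_zero, or_iff_right]
  exact div_ne_zero (mul_ne_zero (by simp) (pow_ne_zero _ (by simp))) hP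

lemma HCres_eq_zero_of_perp {k l : ℕ} (hk : k ≠ 0) (hl : l ≠ 0) {f : gl F (k + l) → ℂ}
    (hf : Invariant (k + l) f)
    (hspan_k : ∀ a : gl F k → ℂ, Invariant k a → a ∈ Submodule.span ℂ {g | IsIndPreCusp k g})
    (hspan_l : ∀ b : gl F l → ℂ, Invariant l b → b ∈ Submodule.span ℂ {g | IsIndPreCusp l g})
    (hperp : ∀ w, IsIndPreCusp (k + l) w → pair w f = 0)
    (hres : ∀ k₁ k₂ (h : k₁ + k₂ = k), k₁ ≠ 0 → k₂ ≠ 0 →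
      HCres k₁ (k₂ + l) (castFun (by omega : k + l = k₁ + (k₂ + l)) f) = 0) :
    HCres k l f = 0 := by
  refine eq_zero_of_forall_pair_tensor_eq_zero (HCres_invariant₂ hk hl hf) fun a ha b hb => ?_
  refine pair_tensor_eq_zero_of_mem_span ?_ (hspan_k a ha) (hspan_l b hb)
  rintro a (ha : IsIndPreCusp k a) b (hb : IsIndPreCusp l b)
  cases ha with
  | unit => exact absurd rfl hk
  | cusp _ _ a ha hca =>
    -- `R_{k,l}(a ⊠ b)` is itself one of the generators `f` is orthogonal to
    exact (pair_HCind_eq_zero_iff hk hl _ hf).mp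
      (hperp _ (.step k l (by omega) (by omega) a ha hca b hb))
  | step k₁ k₂ hk₁ hk₂ c _ _ d _ =>
    -- by transitivity, every slice of `*R_{k,l} f` has vanishing `*R_{k₁,k₂}`
    have hslice : ∀ y, HCres k₁ k₂ (fun x => HCres (k₁ + k₂) l f (x, y)) = 0 := by
      intro y
      funext ⟨x₁, x₂⟩
      rw [HCres_HCres (by omega) (by omega) hl, hres k₁ k₂ rfl (by omega) (by omega)]
      simp [HCres_apply (by omega : k₂ ≠ 0) hl]
    rw [pair_tensor]
    refine Finset.sum_eq_zero fun y _ => ?_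
    rw [(pair_HCind_eq_zero_iff (by omega) (by omega) _
      ((HCres_invariant₂ hk hl hf).invariant_left y)).mpr, mul_zero]
    simp [hslice y, pair]

lemma precuspidal_of_perp {n : ℕ} {f : gl F n → ℂ} (hf : Invariant n f)
    (hspan : ∀ m < n, ∀ g : gl F m → ℂ, Invariant m g →
      g ∈ Submodule.span ℂ {g | IsIndPreCusp m g})
    (hperp : ∀ w, IsIndPreCusp n w → pair w f = 0) : PreCuspidal n f := by
  intro k
  induction k using Nat.strong_induction_on with
  | _ k ih =>
  intro l hk hl hkl
  subst hkl
  rw [castFun_self]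
  exact HCres_eq_zero_of_perp (by omega) (by omega) hf (hspan k (by omega))
    (hspan l (by omega)) hperp
    fun k₁ k₂ _ hk₁ hk₂ => ih k₁ (by omega) (k₂ + l) (by omega) (by omega) (by omega)

lemma mem_span_isIndPreCusp_zero (f : gl F 0 → ℂ) :
    f ∈ Submodule.span ℂ {g | IsIndPreCusp 0 g} := by
  have hf : f = f 0 • fun _ => 1 := by
    funext x
    simp [Subsingleton.elim x 0]
  rw [hf]
  exact Submodule.smul_mem _ _ (Submodule.subset_span IsIndPreCusp.unit)

end Orthogonality

/-- every invariant function is a `ℂ`-linear combination of Harish-Chandra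
inductions of pre-cuspidal functions. -/
theorem span_ind_precuspidal (F : Type) [Field F] [Fintype F] [DecidableEq F]
    (n : ℕ) (f : gl F n → ℂ) (hf : Invariant n f) :
    f ∈ Submodule.span ℂ {g : gl F n → ℂ | IsIndPreCusp n g} := by
  induction n using Nat.strong_induction_on with
  | _ n ih =>
  obtain rfl | hn := Nat.eq_zero_or_pos n
  · exact mem_span_isIndPreCusp_zero f
  have hspan_le : Submodule.span ℂ {g | IsIndPreCusp n g} ≤ InvSub F n :=
    Submodule.span_le.mpr fun _ hg => IsIndPreCusp.invariant hg
  refine le_of_forall_pair_eq_zero hspan_le (fun f₀ hf₀ hperp => ?_) hf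
  have hcusp : PreCuspidal n f₀ :=
    precuspidal_of_perp hf₀ ih fun w hw => hperp w (Submodule.subset_span hw)
  exact eq_zero_of_pair_self_eq_zero
    (hperp f₀ (Submodule.subset_span (IsIndPreCusp.cusp n hn f₀ hf₀ hcusp)))

end HCPaper
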